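/- arXiv:1604.01887 — 2 statements merged into one kernel-verified Lean document; each statement's English description precedes it below -/
import Mathlib

section
/- For the complete graph K_n and any integer k with 3 ≤ k ≤ n, the pendant-tree k-connectivity satisfies τ_k(K_n) = n − k. -/
open SimpleGraph

/-- A pendant `S`-Steiner tree in `G`: a subgraph `T` of `G` that is a tree,
contains `S`, and in which every vertex of `S` has degree 1. -/
def IsPendantSTree {V : Type*} (G : SimpleGraph V) (S : Set V) (T : G.Subgraph) : Prop :=
  S ⊆ T.verts ∧ T.coe.IsTree ∧ ∀ v ∈ S, (T.neighborSet v).ncard = 1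

/-- A family of pairwise internally disjoint pendant `S`-Steiner trees. -/
def IsIntDisjointFamily {V : Type*} (G : SimpleGraph V) (S : Set V)
    (F : Finset G.Subgraph) : Prop :=
  (∀ T ∈ F, IsPendantSTree G S T) ∧
  ∀ T ∈ F, ∀ T' ∈ F, T ≠ T' →
    T.edgeSet ∩ T'.edgeSet = ∅ ∧ T.verts ∩ T'.verts = S

/-- A family of pairwise edge-disjoint pendant `S`-Steiner trees. -/
def IsEdgeDisjointFamily {V : Type*} (G : SimpleGraph V) (S : Set V)
    (F : Finset G.Subgraph) : Prop :=
  (∀ T ∈ F, IsPendantSTree G S T) ∧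
  ∀ T ∈ F, ∀ T' ∈ F, T ≠ T' → T.edgeSet ∩ T'.edgeSet = ∅

/-- `τ(S)`: the maximum number of pairwise internally disjoint pendant `S`-Steiner trees. -/
noncomputable def tauLocal {V : Type*} (G : SimpleGraph V) (S : Set V) : ℕ :=
  sSup {n | ∃ F : Finset G.Subgraph, F.card = n ∧ IsIntDisjointFamily G S F}

/-- Pendant-tree `k`-connectivity `τ_k(G)`. -/
noncomputable def tau {V : Type*} (G : SimpleGraph V) (k : ℕ) : ℕ :=
  sInf {n | ∃ S : Finset V, S.card = k ∧ tauLocal G ↑S = n}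

/-- `μ(S)`: the maximum number of pairwise edge-disjoint pendant `S`-Steiner trees. -/
noncomputable def muLocal {V : Type*} (G : SimpleGraph V) (S : Set V) : ℕ :=
  sSup {n | ∃ F : Finset G.Subgraph, F.card = n ∧ IsEdgeDisjointFamily G S F}

/-- Pendant-tree `k`-edge-connectivity `μ_k(G)`. -/
noncomputable def mu {V : Type*} (G : SimpleGraph V) (k : ℕ) : ℕ :=
  sInf {n | ∃ S : Finset V, S.card = k ∧ muLocal G ↑S = n}

/-- Vertex connectivity (cut version): the least size of a vertex set whose removal
disconnects the graph or leaves at most one vertex. -/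
noncomputable def kappa {V : Type*} [Fintype V] (G : SimpleGraph V) : ℕ :=
  sInf {n | ∃ S : Finset V, S.card = n ∧
    (¬ ((⊤ : G.Subgraph).deleteVerts ↑S).coe.Connected ∨ Fintype.card V - S.card ≤ 1)}

/-- Edge connectivity: the least size of an edge set whose removal disconnects the graph. -/
noncomputable def edgeConn {V : Type*} (G : SimpleGraph V) : ℕ :=
  sInf {n | ∃ F : Finset (Sym2 V), F.card = n ∧ ↑F ⊆ G.edgeSet ∧
    ¬ (G.deleteEdges ↑F).Connected}

/-- Edges of `G` with one endpoint in `S` and the other outside `S`. -/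
def crossEdges {V : Type*} (G : SimpleGraph V) (S : Set V) : Set (Sym2 V) :=
  {e | e ∈ G.edgeSet ∧ ∃ u v, e = s(u, v) ∧ u ∈ S ∧ v ∉ S}

/-!
For `c ∉ S`, the star joining `c` to every vertex of `S` is a pendant `S`-Steiner tree of `K_n`,
and stars with distinct centres meet exactly in `S`; this gives `n - k` internally disjoint trees.
Conversely, once `|S| ≥ 3` a pendant `S`-Steiner tree has a vertex outside `S`: if the unique
neighbour `x` of a terminal `a` were itself a terminal, `a x` would be a whole component of the
tree. Internal disjointness makes these vertices distinct, so there are at most `n - k` trees.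
-/

namespace SimpleGraph

variable {V : Type*}

theorem Preconnected.eq_or_eq_of_forall_adj {H : SimpleGraph V} (hH : H.Preconnected)
    {a x : V} (ha : ∀ y, H.Adj a y → y = x) (hx : ∀ y, H.Adj x y → y = a) (z : V) :
    z = a ∨ z = x := by
  by_contra hz
  obtain ⟨d, -, hd, hdz⟩ := (hH a z).some.exists_boundary_dart {a, x} (by simp) hz
  rcases hd with hd | hd
  · exact hdz (.inr (ha _ (hd ▸ d.adj)))
  · exact hdz (.inl (hx _ (hd ▸ d.adj)))

end SimpleGraph

open SimpleGraph

variable {V : Type*} {G : SimpleGraph V}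

theorem IsPendantSTree.exists_mem_verts_notMem {S : Set V} {T : G.Subgraph}
    (hT : IsPendantSTree G S T) (hS : 2 < S.encard) : ∃ v ∈ T.verts, v ∉ S := by
  obtain ⟨hST, htree, hdeg⟩ := hT
  obtain ⟨a, ha⟩ : S.Nonempty := Set.nonempty_of_encard_ne_zero (pos_of_gt hS).ne'
  obtain ⟨x, hax⟩ := Set.ncard_eq_one.mp (hdeg a ha)
  have hadj : T.Adj a x := hax.superset (Set.mem_singleton x)
  refine ⟨x, T.edge_vert hadj.symm, fun hx => ?_⟩
  obtain ⟨y, hxa⟩ := Set.ncard_eq_one.mp (hdeg x hx)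
  obtain rfl : a = y := hxa.subset hadj.symm
  have hS_pair : S ⊆ {a, x} := fun z hz => by
    simpa [Subtype.ext_iff] using htree.connected.preconnected.eq_or_eq_of_forall_adj
      (a := ⟨a, hST ha⟩) (x := ⟨x, hST hx⟩)
      (fun y hy => Subtype.ext (hax.subset hy)) (fun y hy => Subtype.ext (hxa.subset hy))
      ⟨z, hST hz⟩
  have hpair : ({a, x} : Set V).encard ≤ 2 :=
    (Set.encard_insert_le _ _).trans (by rw [Set.encard_singleton, one_add_one_eq_two])
  exact (Set.encard_le_encard hS_pair).trans hpair |>.not_gt hS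

theorem IsIntDisjointFamily.card_le [Fintype V] {S : Finset V}
    {F : Finset G.Subgraph} (hF : IsIntDisjointFamily G S F) (hS : 2 < S.card) :
    F.card ≤ Fintype.card V - S.card := by
  classical
  rw [← Finset.card_compl]
  refine Finset.card_le_card_of_forall_subsingleton (fun T v => v ∈ T.verts) (fun T hT => ?_)
    (fun v hv T hT T' hT' => ?_)
  · obtain ⟨v, hvT, hvS⟩ := (hF.1 T hT).exists_mem_verts_notMem (by simpa using hS)
    exact ⟨v, by simpa using hvS, hvT⟩
  · by_contra hne
    have hvS : v ∈ (S : Set V) := (hF.2 T hT.1 T' hT'.1 hne).2 ▸ ⟨hT.2, hT'.2⟩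
    exact Finset.mem_compl.mp hv hvS

theorem tauLocal_le {S : Set V} {m : ℕ}
    (h : ∀ F : Finset G.Subgraph, IsIntDisjointFamily G S F → F.card ≤ m) :
    tauLocal G S ≤ m :=
  csSup_le' <| by rintro _ ⟨F, rfl, hF⟩; exact h F hF

theorem IsIntDisjointFamily.card_le_tauLocal [Finite V] {S : Set V} {F : Finset G.Subgraph}
    (hF : IsIntDisjointFamily G S F) : F.card ≤ tauLocal G S := by
  have := Fintype.ofFinite G.Subgraph
  refine le_csSup ⟨Fintype.card G.Subgraph, ?_⟩ ⟨F, rfl, hF⟩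
  rintro _ ⟨F', rfl, -⟩
  exact F'.card_le_univ

def starSubgraph (G : SimpleGraph V) (S : Set V) (c : V) : G.Subgraph :=
  (SimpleGraph.toSubgraph (G ⊓ starGraph c) inf_le_left).induce (insert c S)

section starSubgraph

variable {S : Set V} {c c' : V}

theorem starSubgraph_verts : (starSubgraph G S c).verts = insert c S := rfl

theorem starSubgraph_adj {x y : V} :
    (starSubgraph G S c).Adj x y ↔
      x ∈ insert c S ∧ y ∈ insert c S ∧ G.Adj x y ∧ (x = c ∨ y = c) := by
  simp only [starSubgraph, Subgraph.induce_adj, toSubgraph, inf_adj, starGraph_adj]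
  constructor
  · rintro ⟨hx, hy, h, -, hc⟩; exact ⟨hx, hy, h, hc⟩
  · rintro ⟨hx, hy, h, hc⟩; exact ⟨hx, hy, h, h.ne, hc⟩

theorem coe_starSubgraph (hc : c ∉ S) (hS : S ⊆ G.neighborSet c) :
    (starSubgraph G S c).coe = starGraph ⟨c, Set.mem_insert c S⟩ := by
  ext ⟨x, hx : x ∈ insert c S⟩ ⟨y, hy : y ∈ insert c S⟩
  simp only [Subgraph.coe_adj, starSubgraph_adj, starGraph_adj, ne_eq, Subtype.ext_iff, hx, hy,
    true_and]
  refine ⟨fun ⟨h, hxy⟩ => ⟨h.ne, hxy⟩, ?_⟩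
  rintro ⟨hne, rfl | rfl⟩
  · exact ⟨hS (hy.resolve_left (Ne.symm hne)), .inl rfl⟩
  · exact ⟨(hS (hx.resolve_left hne)).symm, .inr rfl⟩

theorem starSubgraph_neighborSet (hc : c ∉ S) (hS : S ⊆ G.neighborSet c) {v : V} (hv : v ∈ S) :
    (starSubgraph G S c).neighborSet v = {c} := by
  ext w
  simp only [Subgraph.mem_neighborSet, starSubgraph_adj, Set.mem_singleton_iff]
  grind [mem_neighborSet, adj_comm]

theorem isPendantSTree_starSubgraph (hc : c ∉ S) (hS : S ⊆ G.neighborSet c) :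
    IsPendantSTree G S (starSubgraph G S c) := by
  refine ⟨Set.subset_insert c S, ?_, fun v hv => ?_⟩
  · rw [coe_starSubgraph hc hS]
    exact isTree_starGraph _
  · rw [starSubgraph_neighborSet hc hS hv, Set.ncard_singleton]


theorem starSubgraph_edgeSet_inter (hc : c ∉ S) (hne : c ≠ c') :
    (starSubgraph G S c).edgeSet ∩ (starSubgraph G S c').edgeSet = ∅ := by
  refine Set.eq_empty_of_forall_notMem fun e ⟨he, he'⟩ => ?_
  induction e using Sym2.ind with
  | h x y =>
    rw [Subgraph.mem_edgeSet, starSubgraph_adj] at he he'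
    obtain ⟨hx, hy, -⟩ := he'
    rcases he.2.2.2 with rfl | rfl
    · exact hx.elim hne hc
    · exact hy.elim hne hc

theorem starSubgraph_verts_inter (hc : c ∉ S) (hne : c ≠ c') :
    (starSubgraph G S c).verts ∩ (starSubgraph G S c').verts = S := by
  rw [starSubgraph_verts, starSubgraph_verts, Set.insert_inter_of_notMem (by simp [hne, hc]),
    Set.inter_eq_left.mpr (Set.subset_insert c' S)]

end starSubgraph

theorem card_le_tauLocal_of_subset_neighborSet [Finite V] {S : Set V} {C : Finset V}
    (hC : ∀ c ∈ C, c ∉ S ∧ S ⊆ G.neighborSet c) : C.card ≤ tauLocal G S := by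
  classical
  have hinj : Set.InjOn (starSubgraph G S) C := fun c hc c' _ h => by
    have hc' : c ∈ (starSubgraph G S c').verts := by rw [← h]; exact Set.mem_insert c S
    exact hc'.resolve_right (hC c hc).1
  rw [← Finset.card_image_of_injOn hinj]
  refine IsIntDisjointFamily.card_le_tauLocal ⟨?_, ?_⟩
  · simp only [Finset.mem_image]
    rintro _ ⟨c, hc, rfl⟩
    exact isPendantSTree_starSubgraph (hC c hc).1 (hC c hc).2
  · simp only [Finset.mem_image]
    rintro _ ⟨c, hc, rfl⟩ _ ⟨c', -, rfl⟩ hne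
    have hcc' : c ≠ c' := fun h => hne (h ▸ rfl)
    exact ⟨starSubgraph_edgeSet_inter (hC c hc).1 hcc',
      starSubgraph_verts_inter (hC c hc).1 hcc'⟩

theorem tauLocal_top [Fintype V] {S : Finset V} (hS : 2 < S.card) :
    tauLocal (⊤ : SimpleGraph V) S = Fintype.card V - S.card := by
  classical
  refine le_antisymm (tauLocal_le fun F hF => hF.card_le hS) ?_
  rw [← Finset.card_compl]
  refine card_le_tauLocal_of_subset_neighborSet fun c hc => ⟨by simpa using hc, fun v hv => ?_⟩
  exact (top_adj c v).mpr fun h => Finset.mem_compl.mp hc (h ▸ hv)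

theorem tau_eq_of_forall_card_eq {k m : ℕ} (hk : ∃ S : Finset V, S.card = k)
    (h : ∀ S : Finset V, S.card = k → tauLocal G S = m) : tau G k = m := by
  have hset : {m | ∃ S : Finset V, S.card = k ∧ tauLocal G ↑S = m} = {m} := by
    refine Set.eq_singleton_iff_unique_mem.mpr ⟨?_, ?_⟩
    · obtain ⟨S, hS⟩ := hk
      exact ⟨S, hS, h S hS⟩
    · rintro _ ⟨S, hS, rfl⟩
      exact h S hS
  rw [tau, hset, csInf_singleton]

/-- τ_k(K_n) = n - k for 3 ≤ k ≤ n. -/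
theorem tau_completeGraph (n k : ℕ) (hk : 3 ≤ k) (hkn : k ≤ n) :
    tau (⊤ : SimpleGraph (Fin n)) k = n - k := by
  refine tau_eq_of_forall_card_eq ?_ fun S hS => ?_
  · obtain ⟨S, -, hS⟩ := (Finset.univ : Finset (Fin n)).exists_subset_card_eq (by simpa using hkn)
    exact ⟨S, hS⟩
  · rw [tauLocal_top (by omega), Fintype.card_fin, hS]
end

section
/- If G is a graph with τ_k(G) ≥ ℓ, then the vertex connectivity of G satisfies κ(G) ≥ k + ℓ − 2. -/
open SimpleGraph

/-! Let `X` be a vertex cut with `|X| < k + ℓ - 2`. If `G - X` has at most one vertex, count: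
in a family of internally disjoint pendant `S`-Steiner trees every tree but at most one (a single
edge, possible only when `|S| = 2`) owns a private vertex outside `S`, so `τ(S) ≤ n - k + 1`.
Otherwise `X` separates two vertices `a, b`; take a `k`-set `S ∋ a, b` containing
`min (k - 2) |X|` vertices of `X`. In each tree the `a`–`b` path meets `X` at an internal vertex,
which has degree at least two and so lies outside `S`; distinct trees get distinct such vertices,
whence `τ(S) ≤ |X| - (k - 2)`. -/

lemma Finset.exists_superset_card_eq_card_sdiff_le {α : Type*} [Fintype α] [DecidableEq α]
    {P : Finset α} {k : ℕ} (X : Finset α) (hPk : P.card ≤ k) (hk : k ≤ Fintype.card α) :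
    ∃ S, P ⊆ S ∧ S.card = k ∧ (X \ S).card ≤ X.card - (k - P.card) := by
  by_cases hkPX : k ≤ (P ∪ X).card
  · obtain ⟨S, hPS, hSPX, rfl⟩ :=
      Finset.exists_subsuperset_card_eq Finset.subset_union_left hPk hkPX
    have hS : S.card ≤ P.card + (X ∩ S).card :=
      calc S.card ≤ (P ∪ X ∩ S).card :=
            Finset.card_le_card fun x hx => by grind
        _ ≤ P.card + (X ∩ S).card := Finset.card_union_le _ _
    have := Finset.card_sdiff_add_card_inter X S
    exact ⟨S, hPS, rfl, by omega⟩
  · obtain ⟨S, hPXS, -, rfl⟩ :=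
      Finset.exists_subsuperset_card_eq (n := k) (Finset.subset_univ (P ∪ X)) (by omega)
        (by simpa using hk)
    have hXS : X \ S = ∅ := Finset.sdiff_eq_empty_iff_subset.mpr
      (Finset.subset_union_right.trans hPXS)
    exact ⟨S, Finset.subset_union_left.trans hPXS, rfl, by simp [hXS]⟩

namespace SimpleGraph

variable {V : Type*} {G : SimpleGraph V}

lemma exists_forall_walk_exists_mem_of_not_connected_deleteVerts {X : Set V}
    (hX : ¬ ((⊤ : G.Subgraph).deleteVerts X).coe.Connected) {v : V} (hv : v ∉ X) :
    ∃ a b, a ∉ X ∧ b ∉ X ∧ ∀ p : G.Walk a b, ∃ x ∈ p.support, x ∈ X := by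
  rw [← Subgraph.connected_iff', Subgraph.connected_iff_forall_exists_walk_subgraph] at hX
  simp only [Subgraph.deleteVerts_verts, Subgraph.verts_top, Set.mem_sdiff, Set.mem_univ,
    true_and, not_and, not_forall, not_exists] at hX
  obtain ⟨a, b, ha, hb, hab⟩ := hX ⟨v, trivial, hv⟩
  refine ⟨a, b, ha, hb, fun p => ?_⟩
  by_contra! hp
  refine hab p ⟨fun x hx => ⟨trivial, hp x (p.mem_verts_toSubgraph.mp hx)⟩, fun x y hxy => ?_⟩
  exact Subgraph.deleteVerts_adj.mpr ⟨trivial, hp x (p.mem_verts_toSubgraph.mp hxy.fst_mem),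
    trivial, hp y (p.mem_verts_toSubgraph.mp hxy.snd_mem), hxy.adj_sub⟩

end SimpleGraph

namespace IsPendantSTree

variable {V : Type*} {G : SimpleGraph V} {S : Set V} {T : G.Subgraph} {u v w : V}

lemma exists_neighborSet_eq (hT : IsPendantSTree G S T) (hv : v ∈ S) :
    ∃ w, T.neighborSet v = {w} :=
  Set.ncard_eq_one.mp (hT.2.2 v hv)

lemma exists_adj (hT : IsPendantSTree G S T) (hv : v ∈ S) : ∃ w, T.Adj v w := by
  obtain ⟨w, hw⟩ := hT.exists_neighborSet_eq hv
  exact ⟨w, (Set.ext_iff.mp hw w).mpr rfl⟩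

lemma eq_of_adj_of_adj (hT : IsPendantSTree G S T) (hv : v ∈ S) {x y : V}
    (hx : T.Adj v x) (hy : T.Adj v y) : x = y := by
  obtain ⟨w, hw⟩ := hT.exists_neighborSet_eq hv
  have hx' : x ∈ T.neighborSet v := hx
  have hy' : y ∈ T.neighborSet v := hy
  rw [hw] at hx' hy'
  exact hx'.trans hy'.symm

lemma verts_subset_pair_of_adj (hT : IsPendantSTree G S T) (hu : u ∈ S) (hw : w ∈ S)
    (huw : T.Adj u w) : T.verts ⊆ {u, w} := by
  intro z hz
  by_contra hzuw
  obtain ⟨p⟩ := hT.2.1.connected.preconnected ⟨u, hT.1 hu⟩ ⟨z, hz⟩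
  obtain ⟨d, -, hfst, hsnd⟩ :=
    p.exists_boundary_dart {x | (x : V) ∈ ({u, w} : Set V)} (by simp) hzuw
  have hadj : T.Adj d.fst d.snd := d.adj
  rcases hfst with hfst | hfst <;> rw [hfst] at hadj
  · exact hsnd (Or.inr (hT.eq_of_adj_of_adj hu hadj huw))
  · exact hsnd (Or.inl (hT.eq_of_adj_of_adj hw hadj huw.symm))

lemma exists_mem_verts_diff_of_forall_walk [DecidableEq V] (hT : IsPendantSTree G S T)
    {X : Set V} {a b : V} (ha : a ∈ S) (hb : b ∈ S) (haX : a ∉ X) (hbX : b ∉ X)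
    (hsep : ∀ p : G.Walk a b, ∃ x ∈ p.support, x ∈ X) : ∃ x ∈ X, x ∈ T.verts \ S := by
  obtain ⟨p, hpT⟩ := ((T.connected_iff_forall_exists_walk_subgraph).mp
    (T.connected_iff'.mpr hT.2.1.connected)).2 (hT.1 ha) (hT.1 hb)
  have hqT : p.bypass.toSubgraph ≤ T := Walk.toSubgraph_bypass_le_toSubgraph.trans hpT
  obtain ⟨x, hxq, hxX⟩ := hsep p.bypass
  obtain ⟨i, rfl, hi⟩ := Walk.mem_support_iff_exists_getVert.mp hxq
  have hi0 : i ≠ 0 := by rintro rfl; exact haX (by simpa using hxX)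
  have hilen : i < p.bypass.length :=
    lt_of_le_of_ne hi (by rintro rfl; exact hbX (by simpa using hxX))
  refine ⟨_, hxX, hqT.1 (p.bypass.mem_verts_toSubgraph.mpr hxq), fun hxS => ?_⟩
  have h2 := (p.bypass_isPath).ncard_neighborSet_toSubgraph_internal_eq_two hi0 hilen
  have h1 := hT.2.2 _ hxS
  have hfin : (T.neighborSet (p.bypass.getVert i)).Finite :=
    Set.finite_of_ncard_ne_zero (by rw [h1]; exact one_ne_zero)
  have := Set.ncard_le_ncard (Subgraph.neighborSet_subset_of_subgraph hqT _) hfin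
  omega

end IsPendantSTree

namespace IsIntDisjointFamily

variable {V : Type*} {G : SimpleGraph V} {S : Set V} {F : Finset G.Subgraph}

lemma mono (hF : IsIntDisjointFamily G S F) {F' : Finset G.Subgraph} (h : F' ⊆ F) :
    IsIntDisjointFamily G S F' :=
  ⟨fun T hT => hF.1 T (h hT), fun T hT T' hT' => hF.2 T (h hT) T' (h hT')⟩

lemma card_le_card (hF : IsIntDisjointFamily G S F) (Y : Finset V)
    (hY : ∀ T ∈ F, ∃ x ∈ Y, x ∈ T.verts \ S) : F.card ≤ Y.card := by
  refine Finset.card_le_card_of_forall_subsingleton (fun T x => x ∈ T.verts \ S) hY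
    fun x _ T ⟨hT, hxT⟩ T' ⟨hT', hxT'⟩ => ?_
  by_contra hne
  have hx : x ∈ T.verts ∩ T'.verts := ⟨hxT.1, hxT'.1⟩
  rw [(hF.2 T hT T' hT' hne).2] at hx
  exact hxT.2 hx

lemma card_filter_verts_subset_le_one [DecidablePred fun T : G.Subgraph => T.verts ⊆ S]
    (hF : IsIntDisjointFamily G S F) (hS : S.Nonempty) :
    (F.filter fun T => T.verts ⊆ S).card ≤ 1 := by
  obtain ⟨u, hu⟩ := hS
  refine Finset.card_le_one.mpr fun T hT T' hT' => ?_
  rw [Finset.mem_filter] at hT hT'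
  by_contra hne
  have hTp := hF.1 T hT.1
  obtain ⟨w, huw⟩ := hTp.exists_adj hu
  obtain ⟨w', huw'⟩ := (hF.1 T' hT'.1).exists_adj hu
  have hw' : w' = w := by
    rcases hTp.verts_subset_pair_of_adj hu (hT.2 huw.snd_mem) huw
      (hTp.1 (hT'.2 huw'.snd_mem)) with h | h
    · exact absurd h.symm huw'.ne
    · exact h
  subst hw'
  have he : s(u, w') ∈ T.edgeSet ∩ T'.edgeSet := ⟨huw, huw'⟩
  rw [(hF.2 T hT.1 T' hT'.1 hne).1] at he
  exact he

end IsIntDisjointFamily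

section

variable {V : Type*} {G : SimpleGraph V}

lemma tauLocal_le_of_forall_card_le {S : Set V} {c : ℕ}
    (h : ∀ F, IsIntDisjointFamily G S F → F.card ≤ c) : tauLocal G S ≤ c :=
  csSup_le ⟨0, ∅, rfl, by simp [IsIntDisjointFamily]⟩ fun _ ⟨F, hF, hfam⟩ => hF ▸ h F hfam

lemma tau_card_le_tauLocal (S : Finset V) : tau G S.card ≤ tauLocal G S :=
  Nat.sInf_le ⟨S, rfl, rfl⟩

lemma tauLocal_le_card_sub_add_one [Fintype V] {S : Finset V} (hS : S.Nonempty) :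
    tauLocal G S ≤ Fintype.card V - S.card + 1 := by
  classical
  refine tauLocal_le_of_forall_card_le fun F hF => ?_
  rw [← Finset.card_filter_add_card_filter_not (s := F) (fun T : G.Subgraph => T.verts ⊆ S),
    ← Finset.card_compl]
  have hin := hF.card_filter_verts_subset_le_one (Finset.coe_nonempty.mpr hS)
  have hout : (F.filter fun T => ¬ T.verts ⊆ ↑S).card ≤ Sᶜ.card :=
    (hF.mono (Finset.filter_subset _ F)).card_le_card Sᶜ fun T hT => by
      obtain ⟨x, hxT, hxS⟩ := Set.not_subset.mp (Finset.mem_filter.mp hT).2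
      exact ⟨x, Finset.mem_compl.mpr hxS, hxT, hxS⟩
  omega

lemma tau_le_card_sub_add_one [Fintype V] {k : ℕ} (hk : 1 ≤ k) (hkn : k ≤ Fintype.card V) :
    tau G k ≤ Fintype.card V - k + 1 := by
  obtain ⟨S, -, rfl⟩ := Finset.exists_subset_card_eq (s := Finset.univ) hkn
  exact (tau_card_le_tauLocal S).trans (tauLocal_le_card_sub_add_one (Finset.card_pos.mp hk))

lemma tau_le_card_sub_of_forall_walk_exists_mem [Fintype V] {k : ℕ} (hk : 2 ≤ k)
    (hkn : k ≤ Fintype.card V) {X : Finset V} {a b : V}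
    (haX : a ∉ X) (hbX : b ∉ X) (hsep : ∀ p : G.Walk a b, ∃ x ∈ p.support, x ∈ X) :
    tau G k ≤ X.card - (k - 2) := by
  classical
  have hab : a ≠ b := by
    rintro rfl
    obtain ⟨x, hx, hxX⟩ := hsep .nil
    rw [Walk.support_nil, List.mem_singleton] at hx
    exact haX (hx ▸ hxX)
  have hP : ({a, b} : Finset V).card = 2 := Finset.card_pair hab
  obtain ⟨S, hPS, rfl, hXS⟩ := Finset.exists_superset_card_eq_card_sdiff_le X (hP ▸ hk) hkn
  rw [hP] at hXS
  refine (tau_card_le_tauLocal S).trans <| tauLocal_le_of_forall_card_le fun F hF =>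
    (hF.card_le_card (X \ S) fun T hT => ?_).trans hXS
  obtain ⟨x, hxX, hxT, hxS⟩ := (hF.1 T hT).exists_mem_verts_diff_of_forall_walk
    (Finset.mem_coe.mpr (hPS (by simp))) (Finset.mem_coe.mpr (hPS (by simp))) haX hbX hsep
  exact ⟨x, Finset.mem_sdiff.mpr ⟨hxX, hxS⟩, hxT, hxS⟩

end

/-- If τ_k(G) ≥ ℓ then κ(G) ≥ k + ℓ - 2. -/
theorem kappa_of_tau {V : Type*} [Fintype V]
    (G : SimpleGraph V) (k ℓ : ℕ)
    (hk : 2 ≤ k) (hkn : k ≤ Fintype.card V) (hℓ : 1 ≤ ℓ)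
    (h : ℓ ≤ tau G k) :
    k + ℓ - 2 ≤ kappa G := by
  refine le_csInf ⟨_, Finset.univ, rfl, Or.inr (by simp)⟩ ?_
  rintro _ ⟨X, rfl, hcut⟩
  by_cases hsmall : Fintype.card V - X.card ≤ 1
  · have := h.trans (tau_le_card_sub_add_one (G := G) (by omega) hkn)
    omega
  · obtain ⟨v, hv⟩ : ∃ v, v ∉ X := by
      by_contra! hX
      exact hsmall (by simp [Finset.eq_univ_of_forall hX])
    obtain ⟨a, b, haX, hbX, hsep⟩ :=
      exists_forall_walk_exists_mem_of_not_connected_deleteVerts (hcut.resolve_right hsmall)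
        (Finset.mem_coe.not.mpr hv)
    have := h.trans (tau_le_card_sub_of_forall_walk_exists_mem hk hkn haX hbX hsep)
    omega
end
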